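/- arXiv:2602.17254 — 9 statements merged into one kernel-verified Lean document; each statement's English description precedes it below -/
import Mathlib

section
/- Let s ≥ 1 and let n = 3^s. For every node r ∈ ZMod n, the Trivance reachability set after s steps equals the whole ring: D (s-1) r = Finset.univ. In other words, under the Trivance communication pattern on a bidirectional ring of n = 3^s nodes, after ⌈log₃ n⌉ = s communication steps every node has received the data of all other n − 1 nodes. -/
/-- Trivance reachability sets on a ring of `n` nodes (identified with `ZMod n`):
`trivanceD n k r` is the set of nodes whose data node `r` holds after step `k`. -/
def trivanceD (n : ℕ) : ℕ → ZMod n → Finset (ZMod n)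
  | 0, r => {r - 1, r, r + 1}
  | (k+1), r =>
      trivanceD n k (r - 3 ^ (k+1)) ∪ trivanceD n k r ∪ trivanceD n k (r + 3 ^ (k+1))

lemma trivance_mem (n : ℕ) (k : ℕ) (r : ZMod n) (j : ℤ)
    (hj : j.natAbs ≤ (3 ^ (k + 1) - 1) / 2) :
    r + (j : ZMod n) ∈ trivanceD n k r := by
  induction k generalizing r j with
  | zero =>
    norm_num at hj
    have h1 : -1 ≤ j := by omega
    have h2 : j ≤ 1 := by omega
    interval_cases j <;>
      simp [trivanceD, sub_eq_add_neg]
  | succ k ih =>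
    set M : ℕ := 3 ^ (k + 1) with hM
    have h3 : (3:ℕ) ^ (k + 1 + 1) = 3 * M := by rw [hM]; ring
    have hodd : M % 2 = 1 := by rw [hM, Nat.pow_mod]; norm_num
    have hpos : 1 ≤ M := Nat.one_le_pow _ _ (by norm_num)
    rw [h3] at hj
    simp only [trivanceD, Finset.mem_union]
    have hcast : ((M : ℤ) : ZMod n) = (M : ZMod n) := by push_cast; ring
    rcases le_or_gt j.natAbs ((M - 1) / 2) with h | h
    · exact Or.inl (Or.inr (ih r j h))
    · rcases le_or_gt 0 j with hjpos | hjneg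
      · refine Or.inr ?_
        have hmem := ih (r + (M : ZMod n)) (j - M) (by omega)
        have heq : r + (j : ZMod n) = r + (M : ZMod n) + ((j - M : ℤ) : ZMod n) := by
          push_cast; ring
        rw [heq]
        have hM' : ((3:ZMod n) ^ (k + 1)) = (M : ZMod n) := by
          rw [hM]; push_cast; ring
        rw [hM']
        exact hmem
      · refine Or.inl (Or.inl ?_)
        have hmem := ih (r - (M : ZMod n)) (j + M) (by omega)
        have heq : r + (j : ZMod n) = r - (M : ZMod n) + ((j + M : ℤ) : ZMod n) := by
          push_cast; ring
        rw [heq]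
        have hM' : ((3:ZMod n) ^ (k + 1)) = (M : ZMod n) := by
          rw [hM]; push_cast; ring
        rw [hM']
        exact hmem

/-- **Latency-optimality of Trivance.** On a bidirectional ring of `n = 3^s` nodes
(`s ≥ 1`), after `s` communication steps every node has received the data of all
`n` nodes: the reachability set after step `s - 1` is the whole ring. -/
theorem trivance_latency_optimal (s : ℕ) (hs : 1 ≤ s) (r : ZMod (3 ^ s)) :
    trivanceD (3 ^ s) (s - 1) r = Finset.univ := by
  haveI : NeZero (3 ^ s) := ⟨by positivity⟩
  ext x
  simp only [Finset.mem_univ, iff_true]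
  have hs' : s - 1 + 1 = s := by omega
  have hodd : (3:ℕ) ^ s % 2 = 1 := by rw [Nat.pow_mod]; norm_num
  have hpos : 1 ≤ (3:ℕ) ^ s := Nat.one_le_pow _ _ (by norm_num)
  have h := trivance_mem (3 ^ s) (s - 1) r (x - r).valMinAbs (by
    rw [hs']
    have := ZMod.natAbs_valMinAbs_le (x - r)
    omega)
  rwa [ZMod.coe_valMinAbs, add_sub_cancel] at h
end

section
/- Let s ≥ 1, n = 3^s, and 0 ≤ k ≤ s − 1. Then for every node r ∈ ZMod n, the Trivance reachability set after step k is exactly the circular ball of radius R_k = (3^(k+1) − 1)/2 around r: D k r = { u ∈ ZMod n : |(u − r).valMinAbs| ≤ (3^(k+1) − 1)/2 }. -/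
lemma valMinAbs_intCast' {n : ℕ} [NeZero n] (b : ℤ) (h1 : -(n : ℤ) < b * 2)
    (h2 : b * 2 ≤ n) : ((b : ZMod n)).valMinAbs = b :=
  (ZMod.valMinAbs_spec _ _).2 ⟨by simp, h1, h2⟩

lemma two_abs_le_iff {x y : ℤ} : 2 * |x| ≤ y ↔ -y ≤ 2 * x ∧ 2 * x ≤ y := by
  rcases abs_cases x with ⟨e, he⟩ | ⟨e, he⟩ <;> rw [e] <;> omega

lemma trivance_step {n : ℕ} [NeZero n] (m : ℤ) (hm : 1 ≤ m) (hodd : Odd m)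
    (h3 : 3 * m ≤ (n : ℤ)) (a : ZMod n) :
    2 * |a.valMinAbs| ≤ 3 * m - 1 ↔
      (2 * |(a + (m : ZMod n)).valMinAbs| ≤ m - 1 ∨ 2 * |a.valMinAbs| ≤ m - 1 ∨
        2 * |(a - (m : ZMod n)).valMinAbs| ≤ m - 1) := by
  obtain ⟨t, ht⟩ := hodd
  constructor
  · intro h
    set b := a.valMinAbs with hb
    have hba : ((b : ZMod n)) = a := ZMod.coe_valMinAbs a
    obtain ⟨hl, hr⟩ := two_abs_le_iff.mp h
    rcases le_or_gt (2 * |b|) (m - 1) with h1 | h1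
    · exact Or.inr (Or.inl h1)
    have hsplit : 2 * b < -(m - 1) ∨ m - 1 < 2 * b := by
      by_contra hc
      push_neg at hc
      have h2 := two_abs_le_iff.mpr ⟨hc.1, hc.2⟩
      omega
    rcases le_or_gt 0 b with hb0 | hb0
    · -- b large positive: use a - m
      have hbm : 2 * |b - m| ≤ m - 1 := two_abs_le_iff.mpr (by omega)
      right; right
      have e : a - (m : ZMod n) = ((b - m : ℤ) : ZMod n) := by
        push_cast [hba]; ring
      obtain ⟨l2, u2⟩ := two_abs_le_iff.mp hbm
      rw [e, valMinAbs_intCast' _ (by linarith) (by linarith)]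
      exact hbm
    · have hbm : 2 * |b + m| ≤ m - 1 := two_abs_le_iff.mpr (by omega)
      left
      have e : a + (m : ZMod n) = ((b + m : ℤ) : ZMod n) := by
        push_cast [hba]; ring
      obtain ⟨l2, u2⟩ := two_abs_le_iff.mp hbm
      rw [e, valMinAbs_intCast' _ (by linarith) (by linarith)]
      exact hbm
  · rintro (h | h | h)
    · set c := (a + (m : ZMod n)).valMinAbs with hc
      have hca : ((c : ZMod n)) = a + (m : ZMod n) := ZMod.coe_valMinAbs _
      obtain ⟨hl, hr⟩ := two_abs_le_iff.mp h
      have e : a = ((c - m : ℤ) : ZMod n) := by push_cast [hca]; ring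
      rw [e, valMinAbs_intCast' _ (by linarith) (by linarith)]
      exact two_abs_le_iff.mpr (by omega)
    · exact two_abs_le_iff.mpr (by obtain ⟨hl, hr⟩ := two_abs_le_iff.mp h; omega)
    · set c := (a - (m : ZMod n)).valMinAbs with hc
      have hca : ((c : ZMod n)) = a - (m : ZMod n) := ZMod.coe_valMinAbs _
      obtain ⟨hl, hr⟩ := two_abs_le_iff.mp h
      have e : a = ((c + m : ℤ) : ZMod n) := by push_cast [hca]; ring
      rw [e, valMinAbs_intCast' _ (by linarith) (by linarith)]
      exact two_abs_le_iff.mpr (by omega)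

lemma trivance_mem_s1 (s : ℕ) (hs : 1 ≤ s) : ∀ k, k + 1 ≤ s → ∀ (r u : ZMod (3 ^ s)),
    (u ∈ trivanceD (3 ^ s) k r ↔ 2 * |(u - r).valMinAbs| ≤ 3 ^ (k + 1) - 1) := by
  haveI : NeZero (3 ^ s) := ⟨pow_ne_zero _ (by norm_num)⟩
  have hn3 : (3 : ℤ) ≤ ((3 ^ s : ℕ) : ℤ) := by
    push_cast
    calc (3:ℤ) = 3 ^ 1 := by norm_num
    _ ≤ 3 ^ s := by gcongr <;> omega
  intro k
  induction k with
  | zero =>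
    intro _ r u
    simp only [trivanceD, Finset.mem_insert, Finset.mem_singleton, pow_one]
    constructor
    · rintro (h | h | h) <;> subst h
      · have e : r - 1 - r = ((-1 : ℤ) : ZMod (3 ^ s)) := by push_cast; ring
        rw [e, valMinAbs_intCast' _ (by linarith) (by linarith)]; norm_num
      · simp
      · have e : r + 1 - r = ((1 : ℤ) : ZMod (3 ^ s)) := by push_cast; ring
        rw [e, valMinAbs_intCast' _ (by linarith) (by linarith)]; norm_num
    · intro h
      norm_num at h
      set b := (u - r).valMinAbs with hb
      have hba : ((b : ZMod (3 ^ s))) = u - r := ZMod.coe_valMinAbs _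
      obtain ⟨hl, hr⟩ := abs_le.mp h
      have hu : u = r + ((b : ℤ) : ZMod (3 ^ s)) := by rw [hba]; ring
      interval_cases b
      · left; rw [hu]; push_cast; ring
      · right; left; rw [hu]; push_cast; ring
      · right; right; rw [hu]; push_cast; ring
  | succ k ih =>
    intro hk r u
    have hk' : k + 1 ≤ s := by omega
    have hmn : 3 * (3 : ℤ) ^ (k + 1) ≤ ((3 ^ s : ℕ) : ℤ) := by
      push_cast
      calc 3 * (3:ℤ) ^ (k+1) = 3 ^ (k + 2) := by ring
      _ ≤ 3 ^ s := by gcongr <;> omega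
    have hcast : ((3 : ZMod (3 ^ s)) ^ (k + 1)) = (((3 : ℤ) ^ (k + 1) : ℤ) : ZMod (3 ^ s)) := by
      push_cast; ring
    simp only [trivanceD, Finset.mem_union, ih hk']
    have e1 : u - (r - 3 ^ (k + 1)) = (u - r) + (((3:ℤ) ^ (k + 1) : ℤ) : ZMod (3 ^ s)) := by
      rw [← hcast]; ring
    have e2 : u - (r + 3 ^ (k + 1)) = (u - r) - (((3:ℤ) ^ (k + 1) : ℤ) : ZMod (3 ^ s)) := by
      rw [← hcast]; ring
    rw [e1, e2]
    have hstep := trivance_step (n := 3 ^ s) ((3:ℤ) ^ (k + 1)) (one_le_pow₀ (by norm_num))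
      (Odd.pow ⟨1, by norm_num⟩) hmn (u - r)
    rw [show (3:ℤ) ^ (k + 1 + 1) - 1 = 3 * 3 ^ (k + 1) - 1 by ring, hstep]
    tauto

/-- **Block propagation (Lemma `range`).** For `s ≥ 1`, `n = 3^s`, and `0 ≤ k ≤ s - 1`,
the Trivance reachability set of a node `r` after step `k` is exactly the circular
ball of radius `R_k = (3^(k+1) - 1) / 2` around `r`, where the circular distance
of `u` from `r` is `|(u - r).valMinAbs|`. -/
theorem trivance_block_propagation (s : ℕ) (hs : 1 ≤ s) (k : ℕ) (hk : k ≤ s - 1)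
    (r : ZMod (3 ^ s)) :
    trivanceD (3 ^ s) k r =
      Finset.univ.filter
        (fun u : ZMod (3 ^ s) => |(u - r).valMinAbs| ≤ ((3 : ℤ) ^ (k + 1) - 1) / 2) := by
  haveI : NeZero (3 ^ s) := ⟨pow_ne_zero _ (by norm_num)⟩
  ext u
  rw [Finset.mem_filter]
  rw [trivance_mem_s1 s hs k (by omega) r u]
  rw [Int.le_ediv_iff_mul_le (by norm_num : (0:ℤ) < 2)]
  constructor
  · intro h
    exact ⟨Finset.mem_univ _, by linarith⟩
  · rintro ⟨-, h⟩
    linarith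
end

section
/- Let s ≥ 1, n = 3^s, and 1 ≤ j ≤ s − 1. For every r ∈ ZMod n, the three Trivance reachability sets D (j−1) (r − 3^j), D (j−1) r, and D (j−1) (r + 3^j) are pairwise disjoint. Hence in step j of Trivance the data received by node r from its two peers at distance 3^j is entirely new to r and the two received sets are disjoint from each other. -/
/-- Radius of the reachability set after step `k`. -/
def trivanceM : ℕ → ℤ
  | 0 => 1
  | (k+1) => trivanceM k + 3 ^ (k+1)

lemma trivanceM_eq (k : ℕ) : 2 * trivanceM k + 1 = 3 ^ (k+1) := by
  induction k with
  | zero => simp [trivanceM]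
  | succ k ih =>
      simp only [trivanceM]
      have : (3:ℤ) ^ (k+2) = 3 * 3 ^ (k+1) := by ring
      omega

lemma mem_trivanceD {n k : ℕ} {r x : ZMod n} (hx : x ∈ trivanceD n k r) :
    ∃ i : ℤ, |i| ≤ trivanceM k ∧ x = r + (i : ZMod n) := by
  induction k generalizing r with
  | zero =>
      simp only [trivanceD, Finset.mem_insert, Finset.mem_singleton] at hx
      rcases hx with h | h | h
      · exact ⟨-1, by norm_num [trivanceM], by rw [h]; push_cast; ring⟩
      · exact ⟨0, by norm_num [trivanceM], by rw [h]; push_cast; ring⟩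
      · exact ⟨1, by norm_num [trivanceM], by rw [h]; push_cast; ring⟩
  | succ k ih =>
      simp only [trivanceD, Finset.mem_union] at hx
      rcases hx with (h | h) | h
      · obtain ⟨i, hi, hx⟩ := ih h
        refine ⟨i - 3 ^ (k+1), ?_, ?_⟩
        · have h1 : (0:ℤ) < 3 ^ (k+1) := by positivity
          simp only [trivanceM]
          rw [abs_le] at hi ⊢
          omega
        · rw [hx]; push_cast; ring
      · obtain ⟨i, hi, hx⟩ := ih h
        refine ⟨i, ?_, hx⟩
        have h1 : (0:ℤ) < 3 ^ (k+1) := by positivity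
        simp only [trivanceM]; rw [abs_le] at hi ⊢; omega
      · obtain ⟨i, hi, hx⟩ := ih h
        refine ⟨i + 3 ^ (k+1), ?_, ?_⟩
        · have h1 : (0:ℤ) < 3 ^ (k+1) := by positivity
          simp only [trivanceM]
          rw [abs_le] at hi ⊢
          omega
        · rw [hx]; push_cast; ring

lemma trivance_disj_aux (s k : ℕ) (hks : k + 2 ≤ s) (r : ZMod (3 ^ s)) (c : ℤ)
    (hc1 : 3 ^ (k+1) ≤ c) (hc2 : c ≤ 2 * 3 ^ (k+1)) :
    Disjoint (trivanceD (3 ^ s) k r) (trivanceD (3 ^ s) k (r + (c : ZMod (3 ^ s)))) := by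
  rw [Finset.disjoint_left]
  intro x h1 h2
  obtain ⟨i1, hi1, hx1⟩ := mem_trivanceD h1
  obtain ⟨i2, hi2, hx2⟩ := mem_trivanceD h2
  have heq : ((i1 - i2 - c : ℤ) : ZMod (3 ^ s)) = 0 := by
    have h : ((i1 - i2 - c : ℤ) : ZMod (3 ^ s))
        = (r + (i1 : ZMod (3^s))) - (r + (c : ZMod (3^s)) + (i2 : ZMod (3^s))) := by
      push_cast; ring
    rw [h, ← hx1, ← hx2, sub_self]
  rw [ZMod.intCast_zmod_eq_zero_iff_dvd] at heq
  have hm := trivanceM_eq k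
  rw [abs_le] at hi1 hi2
  have hpow : 3 * (3:ℤ) ^ (k+1) ≤ 3 ^ s := by
    calc 3 * (3:ℤ) ^ (k+1) = 3 ^ (k+2) := by ring
    _ ≤ 3 ^ s := pow_le_pow_right₀ (by norm_num) hks
  have hne : i1 - i2 - c < 0 := by omega
  have habs : ((3:ℤ) ^ s) ∣ |i1 - i2 - c| := (dvd_abs _ _).mpr (by exact_mod_cast heq)
  have hle : (3:ℤ) ^ s ≤ |i1 - i2 - c| := Int.le_of_dvd (abs_pos.mpr (by omega)) habs
  rw [abs_of_neg hne] at hle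
  omega

/-- **Disjointness of incoming data.** Let `s ≥ 1`, `n = 3^s`, and `1 ≤ j ≤ s - 1`.
For every node `r`, the three reachability sets `D (j-1) (r - 3^j)`, `D (j-1) r`,
and `D (j-1) (r + 3^j)` are pairwise disjoint: in step `j` of Trivance the data
received by `r` from its two peers at distance `3^j` is entirely new to `r`,
and the two received sets are disjoint from each other. -/
theorem trivance_step_disjoint (s : ℕ) (hs : 1 ≤ s) (j : ℕ) (hj1 : 1 ≤ j)
    (hj2 : j ≤ s - 1) (r : ZMod (3 ^ s)) :
    Disjoint (trivanceD (3 ^ s) (j - 1) (r - 3 ^ j)) (trivanceD (3 ^ s) (j - 1) r) ∧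
    Disjoint (trivanceD (3 ^ s) (j - 1) r) (trivanceD (3 ^ s) (j - 1) (r + 3 ^ j)) ∧
    Disjoint (trivanceD (3 ^ s) (j - 1) (r - 3 ^ j))
      (trivanceD (3 ^ s) (j - 1) (r + 3 ^ j)) := by
  obtain ⟨k, rfl⟩ : ∃ k, j = k + 1 := ⟨j - 1, by omega⟩
  have hks : k + 2 ≤ s := by omega
  have hpos : (0:ℤ) < 3 ^ (k+1) := by positivity
  simp only [Nat.add_sub_cancel]
  refine ⟨?_, ?_, ?_⟩
  · have := trivance_disj_aux s k hks (r - 3 ^ (k+1)) (3 ^ (k+1)) le_rfl (by omega)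
    push_cast at this
    rwa [sub_add_cancel] at this
  · have := trivance_disj_aux s k hks r (3 ^ (k+1)) le_rfl (by omega)
    push_cast at this
    exact this
  · have := trivance_disj_aux s k hks (r - 3 ^ (k+1)) (2 * 3 ^ (k+1)) (by omega) le_rfl
    push_cast at this
    have heq : r - (3:ZMod (3^s)) ^ (k+1) + 2 * 3 ^ (k+1) = r + 3 ^ (k+1) := by ring
    rwa [heq] at this
end

section
/- Let n ≥ 2 and let k be a natural number with 2 · 3^k < n. In step k of Bruck's pattern on a ring of n nodes, every node r sends one message clockwise to r + 3^k and one clockwise to r + 2·3^k. For every v ∈ ZMod n, the total number of these 2n messages traversing the directed clockwise edge from v to v+1 is exactly 3^k + 2·3^k = 3^(k+1); that is, the cardinality of { (r, t) : r ∈ ZMod n, t ∈ {3^k, 2·3^k}, ∃ j < t, v = r + j } equals 3^(k+1). Hence Bruck's per-link congestion in step k is exactly three times that of Trivance in the same step, and the counterclockwise links carry no traffic. -/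
/-!
A message of length `t ≤ n` crosses the link at `v` exactly when its source is `v - j` for some
`j < t`, and these `t` sources are distinct; so the link carries `∑ t` messages over the distinct
lengths `t`, here `3^k + 2·3^k`.
-/

open Finset

/-- A pair `(r, t)` stands for the message sent clockwise from `r` to `r + t`. -/
def messagesThrough {n : ℕ} (T : Set ℕ) (v : ZMod n) : Set (ZMod n × ℕ) :=
  {rt | rt.2 ∈ T ∧ ∃ j < rt.2, v = rt.1 + (j : ZMod n)}

lemma card_image_sub_natCast_range {n t : ℕ} (ht : t ≤ n) (v : ZMod n) :
    ((range t).image fun j : ℕ => v - j).card = t := by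
  rw [card_image_of_injOn, card_range]
  intro a ha b hb hab
  have hab' : (a : ZMod n) = b := sub_right_injective hab
  have ha' : a < n := (mem_range.1 ha).trans_le ht
  have hb' : b < n := (mem_range.1 hb).trans_le ht
  simpa [ZMod.val_natCast_of_lt ha', ZMod.val_natCast_of_lt hb'] using congrArg ZMod.val hab'

lemma messagesThrough_eq_biUnion {n : ℕ} (T : Finset ℕ) (v : ZMod n) :
    messagesThrough (T : Set ℕ) v =
      ↑(T.biUnion fun t => (range t).image (fun j : ℕ => v - j) ×ˢ {t}) := by
  ext ⟨r, s⟩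
  simp only [messagesThrough, Set.mem_ofPred_eq, coe_biUnion, mem_coe, Set.mem_iUnion,
    mem_product, mem_image, mem_range, mem_singleton, exists_prop]
  constructor
  · rintro ⟨hs, j, hj, rfl⟩
    exact ⟨s, hs, ⟨j, hj, by ring⟩, rfl⟩
  · rintro ⟨t, ht, ⟨j, hj, rfl⟩, rfl⟩
    exact ⟨ht, j, hj, by ring⟩

theorem ncard_messagesThrough {n : ℕ} (T : Finset ℕ) (hT : ∀ t ∈ T, t ≤ n) (v : ZMod n) :
    (messagesThrough (T : Set ℕ) v).ncard = ∑ t ∈ T, t := by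
  rw [messagesThrough_eq_biUnion, Set.ncard_coe_finset, card_biUnion]
  · exact sum_congr rfl fun t ht => by
      rw [card_product, card_image_sub_natCast_range (hT t ht), card_singleton, mul_one]
  · intro s _ t _ hst
    refine disjoint_left.2 fun p hps hpt => hst ?_
    rw [mem_product, mem_singleton] at hps hpt
    rw [← hps.2, hpt.2]

theorem bruck_congestion_general (n : ℕ) (k : ℕ) (hk : 2 * 3 ^ k < n)
    (v : ZMod n) :
    Set.ncard {rt : ZMod n × ℕ |
        rt.2 ∈ ({3 ^ k, 2 * 3 ^ k} : Set ℕ) ∧ ∃ j < rt.2, v = rt.1 + (j : ZMod n)} =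
      3 ^ (k + 1) := by
  have hne : 3 ^ k ≠ 2 * 3 ^ k := by
    have : 0 < 3 ^ k := by positivity
    omega
  have hle : ∀ t ∈ ({3 ^ k, 2 * 3 ^ k} : Finset ℕ), t ≤ n := by
    simp only [mem_insert, mem_singleton, forall_eq_or_imp, forall_eq]
    omega
  change (messagesThrough _ v).ncard = _
  rw [← coe_pair, ncard_messagesThrough _ hle, sum_pair hne, pow_succ]
  ring

/-- **Bruck's link congestion.** On a ring of `n ≥ 2` nodes with `2 · 3^k < n`,
in step `k` of Bruck's pattern every node `r` sends one message clockwise to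
`r + 3^k` and one clockwise to `r + 2·3^k`. For every directed clockwise edge
from `v` to `v + 1`, the number of these `2n` messages traversing it is exactly
`3^k + 2·3^k = 3^(k+1)`: Bruck's per-link congestion is three times that of
Trivance in the same step, while the counterclockwise links carry no traffic. -/
theorem bruck_congestion (n : ℕ) (hn : 2 ≤ n) (k : ℕ) (hk : 2 * 3 ^ k < n)
    (v : ZMod n) :
    Set.ncard {rt : ZMod n × ℕ |
        rt.2 ∈ ({3 ^ k, 2 * 3 ^ k} : Set ℕ) ∧ ∃ j < rt.2, v = rt.1 + (j : ZMod n)} =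
      3 ^ (k + 1) :=
  bruck_congestion_general n k hk v
end

section
/- For every natural number L ≥ 1, the congestion-weighted transmitted data fraction of the bandwidth-optimal Swing algorithm on a ring satisfies the exact identity (in ℝ): ∑_{k=0}^{L−1} (2^(k+1) − (−1)^(k+1)) / (3 · 2^(k+1)) = L/3 + (1/9) · (1 − (−1/2)^L). In particular this quantity equals log₂ n / 3 up to a bounded additive error of at most 1/6, establishing the transmission-delay-optimality factor Θ = (1/3) log₂ n of bandwidth-optimal Swing on a ring of n = 2^L nodes. -/
/-!
Writing `r = -1/2`, the step-`k` cost is `(1 - r^(k+1))/3`, so the phase cost is `L/3` minus a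
third of a geometric sum, which gives the closed form. Since `r ≤ r^L ≤ 1` for every `L`, the
correction `(1 - r^L)/9` lies in `[0, 1/6]`.
-/

open Finset

lemma swing_step_cost_eq (k : ℕ) :
    ((2 : ℝ) ^ (k + 1) - (-1 : ℝ) ^ (k + 1)) / (3 * 2 ^ (k + 1))
      = (1 - (-1 / 2 : ℝ) ^ (k + 1)) / 3 := by
  rw [div_pow]
  field_simp

lemma sum_range_neg_half_pow_succ (L : ℕ) :
    ∑ k ∈ range L, (-1 / 2 : ℝ) ^ (k + 1) = -(1 - (-1 / 2 : ℝ) ^ L) / 3 := by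
  simp_rw [pow_succ, ← sum_mul, geom_sum_eq (by norm_num : (-1 / 2 : ℝ) ≠ 1)]
  ring

lemma swing_phase_cost_eq (L : ℕ) :
    ∑ k ∈ range L, ((2 : ℝ) ^ (k + 1) - (-1 : ℝ) ^ (k + 1)) / (3 * 2 ^ (k + 1))
      = L / 3 + (1 / 9) * (1 - (-1 / 2 : ℝ) ^ L) := by
  simp_rw [swing_step_cost_eq, ← sum_div, sum_sub_distrib, sum_const, card_range, nsmul_one,
    sum_range_neg_half_pow_succ]
  ring

lemma self_le_pow_and_pow_le_one {R : Type*} [CommRing R] [LinearOrder R] [IsStrictOrderedRing R]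
    {x : R} (hx₀ : x ≤ 0) (hx₁ : -1 ≤ x) (n : ℕ) : x ≤ x ^ n ∧ x ^ n ≤ 1 := by
  induction n with
  | zero => exact ⟨by simpa using hx₀.trans zero_le_one, (pow_zero x).le⟩
  | succ n ih =>
    obtain ⟨hlo, hhi⟩ := ih
    rw [pow_succ]
    constructor <;> nlinarith

theorem swing_bw_tx_delay_ring_general (L : ℕ) :
    ∑ k ∈ Finset.range L, ((2 : ℝ) ^ (k + 1) - (-1 : ℝ) ^ (k + 1)) / (3 * 2 ^ (k + 1))
        = L / 3 + (1 / 9) * (1 - (-1 / 2 : ℝ) ^ L) ∧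
    |(∑ k ∈ Finset.range L,
        ((2 : ℝ) ^ (k + 1) - (-1 : ℝ) ^ (k + 1)) / (3 * 2 ^ (k + 1))) - L / 3| ≤ 1 / 6 := by
  refine ⟨swing_phase_cost_eq L, ?_⟩
  obtain ⟨hlo, hhi⟩ := self_le_pow_and_pow_le_one (by norm_num : (-1 / 2 : ℝ) ≤ 0) (by norm_num) L
  rw [swing_phase_cost_eq, abs_le]
  constructor <;> linarith

/-- **Transmission-delay optimality of bandwidth-optimal Swing on a ring.**
On a ring of `n = 2^L` nodes, in step `k` the per-link congestion is
`(2^(k+1) - (-1)^(k+1))/3` while the transmitted data fraction is `1/2^(k+1)`.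
The congestion-weighted transmitted data fraction satisfies the exact identity
`∑_{k=0}^{L-1} (2^(k+1) - (-1)^(k+1)) / (3 · 2^(k+1)) = L/3 + (1/9)(1 - (-1/2)^L)`,
which equals `log₂ n / 3 = L/3` up to an additive error of at most `1/6`,
establishing the factor `Θ = (1/3) log₂ n`. -/
theorem swing_bw_tx_delay_ring (L : ℕ) (hL : 1 ≤ L) :
    ∑ k ∈ Finset.range L, ((2 : ℝ) ^ (k + 1) - (-1 : ℝ) ^ (k + 1)) / (3 * 2 ^ (k + 1))
        = L / 3 + (1 / 9) * (1 - (-1 / 2 : ℝ) ^ L) ∧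
    |(∑ k ∈ Finset.range L,
        ((2 : ℝ) ^ (k + 1) - (-1 : ℝ) ^ (k + 1)) / (3 * 2 ^ (k + 1))) - L / 3| ≤ 1 / 6 :=
  swing_bw_tx_delay_ring_general L
end

section
/- For every natural number D ≥ 2, the following identity of convergent series holds in ℝ: 2 · ∑_{d=0}^{D−1} ∑_{k=0}^{∞} 3^k / 3^(1 + d + D·k) = (3^D − 1) / (3^D − 3). This is the asymptotic (n → ∞) transmission-delay-optimality factor of bandwidth-optimal Trivance on a D-dimensional torus, relative to the ideal cost mβ/D. -/
/-! Substituting `r = b / b ^ D`, the inner series is geometric: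
`b ^ k / b ^ (m + D k) = r ^ k / b ^ m`, and `r < 1` exactly when `D ≥ 2`. Summing
`b ^ D / (b ^ (1 + d) (b ^ D - b))` over `d < D` is then a finite geometric sum in `1 / b`;
for `b = 3` the prefactor `b - 1` is the factor `2` of the two phases. -/

open Finset

lemma tsum_pow_div_pow_add_mul {b : ℝ} (hb : 1 < b) {D : ℕ} (hD : 2 ≤ D) (m : ℕ) :
    ∑' k : ℕ, b ^ k / b ^ (m + D * k) = b ^ D / (b ^ m * (b ^ D - b)) := by
  have hb0 : 0 < b := one_pos.trans hb
  have hbD : b < b ^ D := lt_self_pow₀ hb hD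
  have hr : b / b ^ D < 1 := (div_lt_one (hb0.trans hbD)).2 hbD
  have hterm : ∀ k : ℕ, b ^ k / b ^ (m + D * k) = (b ^ m)⁻¹ * (b / b ^ D) ^ k := fun k => by
    rw [div_pow, pow_add, pow_mul]
    field_simp
  simp_rw [hterm]
  rw [tsum_mul_left, tsum_geometric_of_lt_one (by positivity) hr]
  have : b ^ D - b ≠ 0 := (sub_pos.2 hbD).ne'
  field_simp

lemma sub_one_mul_sum_one_div_pow_succ {b : ℝ} (hb : b ≠ 0) (D : ℕ) :
    (b - 1) * ∑ d ∈ range D, 1 / b ^ (1 + d) = 1 - 1 / b ^ D := by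
  induction D with
  | zero => simp
  | succ D ih =>
    rw [sum_range_succ, mul_add, ih, add_comm 1 D, pow_succ]
    field_simp
    ring

theorem sub_one_mul_sum_tsum_pow_div_pow {b : ℝ} (hb : 1 < b) {D : ℕ} (hD : 2 ≤ D) :
    (b - 1) * ∑ d ∈ range D, ∑' k : ℕ, b ^ k / b ^ (1 + d + D * k)
      = (b ^ D - 1) / (b ^ D - b) := by
  have hb0 : b ≠ 0 := (one_pos.trans hb).ne'
  have hsplit : ∀ d : ℕ, b ^ D / (b ^ (1 + d) * (b ^ D - b))
      = 1 / b ^ (1 + d) * (b ^ D / (b ^ D - b)) := fun d => by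
    rw [one_div_mul_eq_div, div_div, mul_comm (b ^ D - b)]
  simp_rw [tsum_pow_div_pow_add_mul hb hD, hsplit]
  rw [← sum_mul, ← mul_assoc, sub_one_mul_sum_one_div_pow_succ hb0]
  have hbD : b ^ D - b ≠ 0 := (sub_pos.2 (lt_self_pow₀ hb hD)).ne'
  field_simp

/-- **Asymptotic transmission-delay factor of bandwidth-optimal Trivance on a
`D`-dimensional torus** (`D ≥ 2`), relative to the ideal cost `mβ/D`: in global
step `k` within dimension offset `d` the transmitted data fraction is
`1/3^(1+d+D·k)` and the per-link congestion is `3^k`; the factor `2` accounts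
for the Reduce-Scatter and AllGather phases. As `n → ∞`,
`2 · ∑_{d=0}^{D-1} ∑_{k=0}^{∞} 3^k / 3^(1+d+D·k) = (3^D - 1)/(3^D - 3)`. -/
theorem trivance_bw_tx_delay_torus (D : ℕ) (hD : 2 ≤ D) :
    2 * ∑ d ∈ Finset.range D, ∑' k : ℕ, (3 : ℝ) ^ k / 3 ^ (1 + d + D * k)
      = ((3 : ℝ) ^ D - 1) / ((3 : ℝ) ^ D - 3) := by
  have h := sub_one_mul_sum_tsum_pow_div_pow (b := (3 : ℝ)) (by norm_num) hD
  rwa [show (3 : ℝ) - 1 = 2 by norm_num] at h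
end

section
/- For every natural number D ≥ 2, the following identity of convergent series holds in ℝ: 2 · ∑_{d=0}^{D−1} ∑_{k=0}^{∞} 3 · 3^k / 3^(1 + d + D·k) = 3 · (3^D − 1) / (3^D − 3). This is the asymptotic (n → ∞) transmission-delay-optimality factor of bandwidth-optimal Bruck on a D-dimensional torus, relative to the ideal cost mβ/D, and is exactly three times the corresponding factor of bandwidth-optimal Trivance. -/
/-- **Asymptotic transmission-delay factor of bandwidth-optimal Bruck on a
`D`-dimensional torus** (`D ≥ 2`), relative to the ideal cost `mβ/D`: in global
step `k` within dimension offset `d` the transmitted data fraction is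
`1/3^(1+d+D·k)` and the per-link congestion is `3·3^k`; the factor `2` accounts
for the two phases. As `n → ∞`,
`2 · ∑_{d=0}^{D-1} ∑_{k=0}^{∞} 3·3^k / 3^(1+d+D·k) = 3·(3^D - 1)/(3^D - 3)`,
exactly three times the corresponding factor of bandwidth-optimal Trivance. -/
theorem bruck_bw_tx_delay_torus (D : ℕ) (hD : 2 ≤ D) :
    2 * ∑ d ∈ Finset.range D, ∑' k : ℕ, 3 * (3 : ℝ) ^ k / 3 ^ (1 + d + D * k)
      = 3 * (((3 : ℝ) ^ D - 1) / ((3 : ℝ) ^ D - 3)) := by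
  have h9 : (9 : ℝ) ≤ (3 : ℝ) ^ D := by
    calc (9 : ℝ) = 3 ^ 2 := by norm_num
    _ ≤ 3 ^ D := pow_le_pow_right₀ (by norm_num) hD
  have hr : (3 : ℝ) / 3 ^ D < 1 := by
    rw [div_lt_one (by linarith)]; linarith
  have hr0 : (0 : ℝ) ≤ 3 / 3 ^ D := by positivity
  have hinner : ∀ d : ℕ,
      ∑' k : ℕ, 3 * (3 : ℝ) ^ k / 3 ^ (1 + d + D * k)
        = (1 / 3 ^ d) * (1 - 3 / 3 ^ D)⁻¹ := by
    intro d
    have : ∀ k : ℕ, 3 * (3 : ℝ) ^ k / 3 ^ (1 + d + D * k)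
        = (1 / 3 ^ d) * (3 / 3 ^ D) ^ k := by
      intro k
      rw [pow_add, pow_add, pow_mul, div_pow]
      field_simp
    rw [tsum_congr this, tsum_mul_left, tsum_geometric_of_lt_one hr0 hr]
  simp only [hinner]
  rw [← Finset.sum_mul]
  have hgeo : ∑ d ∈ Finset.range D, (1 / (3 : ℝ)) ^ d
      = ((1 / 3) ^ D - 1) / (1 / 3 - 1) := geom_sum_eq (by norm_num) D
  have hsum : ∑ d ∈ Finset.range D, (1 / (3 : ℝ) ^ d)
      = ((1 / 3) ^ D - 1) / (1 / 3 - 1) := by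
    rw [← hgeo]; exact Finset.sum_congr rfl fun d _ => by rw [div_pow, one_pow]
  rw [hsum]
  have hD0 : (3 : ℝ) ^ D ≠ 0 := by positivity
  have h3 : (3 : ℝ) ^ D - 3 ≠ 0 := by linarith
  rw [div_pow, one_pow]
  field_simp
  ring
end

section
/- For every natural number D ≥ 2, the following identity of convergent series holds in ℝ: ∑_{d=0}^{D−1} ∑_{k=0}^{∞} 2^k / 2^(1 + d + D·k) = (2^D − 1) / (2^D − 2). This is the asymptotic (n → ∞) transmission-delay-optimality factor of bandwidth-optimal Recursive Doubling on a D-dimensional torus, relative to the ideal cost mβ/D. -/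
/-- **Asymptotic transmission-delay factor of bandwidth-optimal Recursive Doubling
on a `D`-dimensional torus** (`D ≥ 2`), relative to the ideal cost `mβ/D`: in global
step `k` within dimension offset `d` the transmitted data fraction is
`1/2^(1+d+D·k)` and the per-link congestion is `2^k`. As `n → ∞`,
`∑_{d=0}^{D-1} ∑_{k=0}^{∞} 2^k / 2^(1+d+D·k) = (2^D - 1)/(2^D - 2)`. -/
theorem recdoub_bw_tx_delay_torus (D : ℕ) (hD : 2 ≤ D) :
    ∑ d ∈ Finset.range D, ∑' k : ℕ, (2 : ℝ) ^ k / 2 ^ (1 + d + D * k)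
      = ((2 : ℝ) ^ D - 1) / ((2 : ℝ) ^ D - 2) := by
  have h4 : (4 : ℝ) ≤ 2 ^ D := by
    calc (4:ℝ) = 2^2 := by norm_num
    _ ≤ 2^D := by exact pow_le_pow_right₀ (by norm_num) hD
  have hr0 : (0:ℝ) ≤ 2 / 2 ^ D := by positivity
  have hr1 : (2:ℝ) / 2 ^ D < 1 := by
    rw [div_lt_one (by positivity)]; linarith
  have hinner : ∀ d : ℕ, (∑' k : ℕ, (2 : ℝ) ^ k / 2 ^ (1 + d + D * k))
      = (1 / 2 ^ (1 + d)) * (1 / (1 - 2 / 2 ^ D)) := by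
    intro d
    have : ∀ k : ℕ, (2 : ℝ) ^ k / 2 ^ (1 + d + D * k)
        = (1 / 2 ^ (1 + d)) * (2 / 2 ^ D) ^ k := by
      intro k
      rw [pow_add, pow_mul, div_pow, div_mul_div_comm]
      ring
    rw [tsum_congr this, tsum_mul_left, tsum_geometric_of_lt_one hr0 hr1, ← one_div]
  rw [Finset.sum_congr rfl (fun d _ => hinner d), ← Finset.sum_mul]
  have hs : ∑ d ∈ Finset.range D, (1:ℝ) / 2 ^ (1 + d) = 1 - 1 / 2 ^ D := by
    clear hinner hD h4 hr0 hr1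
    induction D with
    | zero => simp
    | succ n ih =>
      rw [Finset.sum_range_succ, ih, pow_add, pow_succ]
      field_simp
      ring
  rw [hs]
  have h2 : (2:ℝ)^D ≠ 0 := by positivity
  have h3 : (1:ℝ) - 2 / 2^D ≠ 0 := by
    intro h; rw [sub_eq_zero] at h
    have := h.symm; rw [div_eq_one_iff_eq h2] at this; linarith
  have h5 : (2:ℝ)^D - 2 ≠ 0 := by intro h; linarith [sub_eq_zero.mp h]
  field_simp
end

section
/- For every natural number D ≥ 2, the following identity of convergent series holds in ℝ: ∑_{d=0}^{D−1} ∑_{k=0}^{∞} (2^(k+1) − (−1)^(k+1)) / (3 · 2^(1 + d + D·k)) = 2^D · (2^D − 1) / ((2^D − 2) · (2^D + 1)). This is the asymptotic (n → ∞) transmission-delay-optimality factor of bandwidth-optimal Swing on a D-dimensional torus, relative to the ideal cost mβ/D. -/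
/-!
Writing the congestion as `(2^(k+1) - (-1)^(k+1)) / 3` and the data fraction of step `k`
at offset `d` as `2^-(d+1) · (2^D)^-k`, each inner series splits into the geometric series
of ratios `2/2^D` and `-1/2^D`, both convergent because `D ≥ 2`. Every inner sum is
therefore `2^-(d+1) · q² / ((q - 2)(q + 1))` with `q = 2^D`, and the outer sum of
`2^-(d+1)` over `d < D` is `1 - 1/q`.
-/

open Finset

theorem hasSum_two_pow_sub_neg_one_pow_div_pow {q : ℝ} (hq : 2 < |q|) :
    HasSum (fun k : ℕ => ((2 : ℝ) ^ (k + 1) - (-1) ^ (k + 1)) / q ^ k)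
      (3 * q ^ 2 / ((q - 2) * (q + 1))) := by
  have hq0 : q ≠ 0 := by rintro rfl; norm_num at hq
  have hq2 : q - 2 ≠ 0 := by intro h; rw [show q = 2 by linarith] at hq; norm_num at hq
  have hq1 : q + 1 ≠ 0 := by intro h; rw [show q = -1 by linarith] at hq; norm_num at hq
  have hr₂ : |2 / q| < 1 := by
    rw [abs_div, abs_two, div_lt_one (by positivity)]; exact hq
  have hr₁ : |-1 / q| < 1 := by
    rw [abs_div, abs_neg, abs_one, div_lt_one (by positivity)]; linarith
  have hterm : (fun k : ℕ => ((2 : ℝ) ^ (k + 1) - (-1) ^ (k + 1)) / q ^ k)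
      = fun k => 2 * (2 / q) ^ k + (-1 / q) ^ k := by
    ext k
    rw [div_pow, div_pow, pow_succ, pow_succ]
    field_simp
    ring
  have hsum : 3 * q ^ 2 / ((q - 2) * (q + 1)) = 2 * (1 - 2 / q)⁻¹ + (1 - -1 / q)⁻¹ := by
    rw [one_sub_div hq0, neg_div, sub_neg_eq_add, one_add_div hq0]
    field_simp
    ring
  rw [hterm, hsum]
  exact ((hasSum_geometric_of_abs_lt_one hr₂).mul_left 2).add (hasSum_geometric_of_abs_lt_one hr₁)

theorem tsum_two_pow_sub_neg_one_pow_div_three_mul_two_pow {D : ℕ} (hD : 2 ≤ D) (d : ℕ) :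
    ∑' k : ℕ, ((2 : ℝ) ^ (k + 1) - (-1 : ℝ) ^ (k + 1)) / (3 * 2 ^ (1 + d + D * k))
      = 1 / 2 ^ (d + 1) * ((2 ^ D) ^ 2 / ((2 ^ D - 2) * (2 ^ D + 1))) := by
  have hq : 2 < |(2 : ℝ) ^ D| := by
    rw [abs_of_pos (by positivity)]
    exact lt_self_pow₀ one_lt_two hD
  have hterm : ∀ k : ℕ,
      ((2 : ℝ) ^ (k + 1) - (-1 : ℝ) ^ (k + 1)) / (3 * 2 ^ (1 + d + D * k))
        = (3 * 2 ^ (d + 1))⁻¹ * (((2 : ℝ) ^ (k + 1) - (-1) ^ (k + 1)) / (2 ^ D) ^ k) := by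
    intro k
    rw [show (2 : ℝ) ^ (1 + d + D * k) = 2 ^ (d + 1) * (2 ^ D) ^ k by
      rw [← pow_mul, ← pow_add, add_comm 1 d]]
    field_simp
  rw [tsum_congr hterm, tsum_mul_left, (hasSum_two_pow_sub_neg_one_pow_div_pow hq).tsum_eq]
  field_simp

theorem sum_range_one_div_two_pow_succ (n : ℕ) :
    ∑ d ∈ range n, (1 : ℝ) / 2 ^ (d + 1) = 1 - 1 / 2 ^ n := by
  induction n with
  | zero => simp
  | succ n ih =>
    rw [sum_range_succ, ih]
    field_simp
    ring

/-- **Asymptotic transmission-delay factor of bandwidth-optimal Swing on a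
`D`-dimensional torus** (`D ≥ 2`), relative to the ideal cost `mβ/D`: in global
step `k` within dimension offset `d` the transmitted data fraction is
`1/2^(1+d+D·k)` and the per-link congestion is `(2^(k+1) - (-1)^(k+1))/3`. As `n → ∞`,
`∑_{d=0}^{D-1} ∑_{k=0}^{∞} (2^(k+1) - (-1)^(k+1)) / (3 · 2^(1+d+D·k))
  = 2^D (2^D - 1) / ((2^D - 2)(2^D + 1))`. -/
theorem swing_bw_tx_delay_torus (D : ℕ) (hD : 2 ≤ D) :
    ∑ d ∈ Finset.range D,
        ∑' k : ℕ, ((2 : ℝ) ^ (k + 1) - (-1 : ℝ) ^ (k + 1)) / (3 * 2 ^ (1 + d + D * k))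
      = (2 : ℝ) ^ D * ((2 : ℝ) ^ D - 1) / (((2 : ℝ) ^ D - 2) * ((2 : ℝ) ^ D + 1)) := by
  have hq2 : (2 : ℝ) ^ D - 2 ≠ 0 := (sub_pos.2 (lt_self_pow₀ one_lt_two hD)).ne'
  simp_rw [tsum_two_pow_sub_neg_one_pow_div_three_mul_two_pow hD, ← sum_mul,
    sum_range_one_div_two_pow_succ]
  field_simp
end
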